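/- Let G be a Δ-regular finite simple graph of order n ≥ 1 and size m. Then the degree of the alliance polynomial A(G;x) equals n + Δ; moreover n = (Deg_min(A(G;x)) + Deg(A(G;x)))/2 and m = (Deg(A(G;x))² − Deg_min(A(G;x))²)/8, where also m = A_{−Δ}(G)·(Deg(A(G;x)) − Deg_min(A(G;x)))/4. -/

import Mathlib

open Polynomial Finset

/-- Number of neighbors of `v` inside the set `S` (denoted δ_S(v)). -/
def SimpleGraph.degIn {V : Type*} [Fintype V] [DecidableEq V]
    (G : SimpleGraph V) [DecidableRel G.Adj] (S : Finset V) (v : V) : ℕ :=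
  (S.filter (fun u => G.Adj v u)).card

/-- Number of neighbors of `v` outside the set `S` (denoted δ_{S̄}(v)). -/
def SimpleGraph.degOut {V : Type*} [Fintype V] [DecidableEq V]
    (G : SimpleGraph V) [DecidableRel G.Adj] (S : Finset V) (v : V) : ℕ :=
  (Sᶜ.filter (fun u => G.Adj v u)).card

/-- `S` is an exact defensive `k`-alliance in `G`: the induced subgraph `⟨S⟩` is connected
(in particular `S` is nonempty) and `k = k_S = min_{v ∈ S} (δ_S(v) - δ_{S̄}(v))`. -/
def SimpleGraph.IsExactAlliance {V : Type*} [Fintype V] [DecidableEq V]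
    (G : SimpleGraph V) [DecidableRel G.Adj] (S : Finset V) (k : ℤ) : Prop :=
  (G.induce (S : Set V)).Connected ∧
    (∀ v ∈ S, k ≤ (G.degIn S v : ℤ) - (G.degOut S v : ℤ)) ∧
    (∃ v ∈ S, (G.degIn S v : ℤ) - (G.degOut S v : ℤ) = k)

/-- `A_k(G)`: the number of exact defensive `k`-alliances in `G`. -/
noncomputable def SimpleGraph.allianceCoeff {V : Type*} [Fintype V] [DecidableEq V]
    (G : SimpleGraph V) [DecidableRel G.Adj] (k : ℤ) : ℕ :=
  Set.ncard {S : Finset V | G.IsExactAlliance S k}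

/-- The alliance polynomial `A(G;x) = Σ_{k=-Δ}^{Δ} A_k(G) x^{n+k}`, where `n` is the order and
`Δ` the maximum degree of `G`, regarded as a real polynomial. -/
noncomputable def SimpleGraph.alliancePoly {V : Type*} [Fintype V] [DecidableEq V]
    (G : SimpleGraph V) [DecidableRel G.Adj] : Polynomial ℝ :=
  ∑ k ∈ Finset.Icc (-(G.maxDegree : ℤ)) (G.maxDegree : ℤ),
    (G.allianceCoeff k : ℝ) • X ^ (((Fintype.card V : ℤ) + k).toNat)

/-!
A singleton `{v}` is an exact `(-deg v)`-alliance, and in a connected set `S` of at least two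
vertices every vertex has a neighbour in `S`; so in a `Δ`-regular graph the exact
`(-Δ)`-alliances are exactly the `n` singletons, while the vertex set of any connected component
is an exact `Δ`-alliance. Hence the extreme terms of `A(G;x)` are `n x^{n-Δ}` and
`A_Δ(G) x^{n+Δ}` with `A_Δ(G) > 0`, and the formulas for `n` and `m` follow from
`Deg = n + Δ`, `Deg_min = n - Δ` and the handshake identity `2m = nΔ`.
-/

namespace SimpleGraph

variable {V : Type*} [Fintype V] {G : SimpleGraph V} [DecidableRel G.Adj]

theorem IsRegularOfDegree.two_mul_card_edgeFinset {d : ℕ} (hreg : G.IsRegularOfDegree d) :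
    2 * #G.edgeFinset = Fintype.card V * d := by
  rw [← sum_degrees_eq_twice_card_edges, sum_congr rfl fun v _ ↦ hreg.degree_eq v, sum_const,
    card_univ, smul_eq_mul]

variable [DecidableEq V]

theorem degIn_add_degOut (S : Finset V) (v : V) : G.degIn S v + G.degOut S v = G.degree v := by
  rw [degIn, degOut, ← card_union_of_disjoint (disjoint_filter_filter disjoint_compl_right),
    ← filter_union, union_compl, degree, neighborFinset_eq_filter]

theorem isExactAlliance_singleton (v : V) : G.IsExactAlliance {v} (-(G.degree v : ℤ)) := by
  have hin : G.degIn {v} v = 0 := by simp [degIn, filter_singleton]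
  have hval : (G.degIn {v} v : ℤ) - G.degOut {v} v = -(G.degree v : ℤ) := by
    rw [← degIn_add_degOut {v} v, hin]
    simp
  refine ⟨by rw [coe_singleton]; exact Connected.of_subsingleton, fun u hu ↦ ?_,
    v, mem_singleton_self v, hval⟩
  rw [mem_singleton.mp hu, hval]

theorem eq_singleton_of_degIn_eq_zero {S : Finset V} (hS : (G.induce (S : Set V)).Connected)
    {v : V} (hv : v ∈ S) (hin : G.degIn S v = 0) : S = {v} := by
  refine eq_singleton_iff_unique_mem.mpr ⟨hv, fun u hu ↦ by_contra fun hne ↦ ?_⟩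
  obtain ⟨p⟩ := hS.preconnected ⟨v, hv⟩ ⟨u, hu⟩
  cases p with
  | nil => exact hne rfl
  | @cons _ w _ hadj _ =>
    rw [degIn, card_eq_zero, filter_eq_empty_iff] at hin
    exact hin (mem_coe.mp w.2) hadj

section Regular

variable {d : ℕ}

theorem IsRegularOfDegree.isExactAlliance_neg_iff (hreg : G.IsRegularOfDegree d) (S : Finset V) :
    G.IsExactAlliance S (-(d : ℤ)) ↔ ∃ v, S = {v} := by
  constructor
  · rintro ⟨hS, -, v, hv, hval⟩
    have hsum := degIn_add_degOut (G := G) S v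
    rw [hreg.degree_eq v] at hsum
    exact ⟨v, eq_singleton_of_degIn_eq_zero hS hv (by omega)⟩
  · rintro ⟨v, rfl⟩
    simpa [hreg.degree_eq v] using isExactAlliance_singleton (G := G) v

theorem IsRegularOfDegree.allianceCoeff_neg (hreg : G.IsRegularOfDegree d) :
    G.allianceCoeff (-(d : ℤ)) = Fintype.card V := by
  have hset : {S : Finset V | G.IsExactAlliance S (-(d : ℤ))} = Set.range singleton := by
    ext S
    simp only [Set.mem_ofPred_eq, hreg.isExactAlliance_neg_iff, Set.mem_range, eq_comm]
  rw [allianceCoeff, hset, ← Set.image_univ,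
    Set.ncard_image_of_injective _ singleton_injective, Set.ncard_univ, Nat.card_eq_fintype_card]

theorem IsRegularOfDegree.isExactAlliance_supp (hreg : G.IsRegularOfDegree d)
    (C : G.ConnectedComponent) :
    G.IsExactAlliance C.supp.toFinset d := by
  have hout : ∀ v ∈ C.supp.toFinset, G.degOut C.supp.toFinset v = 0 := fun v hv ↦ by
    rw [degOut, card_eq_zero, filter_eq_empty_iff]
    intro u hu hadj
    exact mem_compl.mp hu (Set.mem_toFinset.mpr
      (C.mem_supp_of_adj_mem_supp (Set.mem_toFinset.mp hv) hadj))
  have hval : ∀ v ∈ C.supp.toFinset,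
      (G.degIn C.supp.toFinset v : ℤ) - G.degOut C.supp.toFinset v = d := fun v hv ↦ by
    have hsum := degIn_add_degOut (G := G) C.supp.toFinset v
    rw [hreg.degree_eq v, hout v hv] at hsum
    rw [hout v hv, ← hsum]
    simp
  obtain ⟨v, hv⟩ := C.nonempty_supp
  rw [← Set.mem_toFinset] at hv
  refine ⟨?_, fun u hu ↦ (hval u hu).ge, v, hv, hval v hv⟩
  rw [Set.coe_toFinset]
  exact (C.maximal_connected_induce_supp).prop

theorem IsRegularOfDegree.allianceCoeff_pos [Nonempty V] (hreg : G.IsRegularOfDegree d) :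
    0 < G.allianceCoeff d :=
  (Set.ncard_pos (Set.toFinite _)).mpr
    ⟨_, hreg.isExactAlliance_supp (G.connectedComponentMk (Classical.arbitrary V))⟩

end Regular

theorem coeff_alliancePoly [Nonempty V] {k : ℤ} (hk : |k| ≤ G.maxDegree) :
    G.alliancePoly.coeff ((Fintype.card V : ℤ) + k).toNat = G.allianceCoeff k := by
  have hlt := G.maxDegree_lt_card_verts
  rw [abs_le] at hk
  rw [alliancePoly, finsetSum_coeff, sum_eq_single k]
  · simp
  · intro j hj hne
    rw [mem_Icc] at hj
    rw [coeff_smul, coeff_X_pow, if_neg (by omega), smul_zero]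
  · intro hk'
    exact absurd (mem_Icc.mpr hk) hk'

theorem natDegree_alliancePoly_le : G.alliancePoly.natDegree ≤ Fintype.card V + G.maxDegree :=
  natDegree_sum_le_of_forall_le _ _ fun k hk ↦ by
    rw [mem_Icc] at hk
    refine (natDegree_smul_le _ _).trans ?_
    rw [natDegree_X_pow]
    omega

theorem coeff_alliancePoly_eq_zero_of_lt {i : ℕ} (hi : i < Fintype.card V - G.maxDegree) :
    G.alliancePoly.coeff i = 0 := by
  rw [alliancePoly, finsetSum_coeff]
  refine sum_eq_zero fun k hk ↦ ?_
  rw [mem_Icc] at hk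
  rw [coeff_smul, coeff_X_pow, if_neg (by omega), smul_zero]

theorem natDegree_alliancePoly [Nonempty V] (h : G.allianceCoeff G.maxDegree ≠ 0) :
    G.alliancePoly.natDegree = Fintype.card V + G.maxDegree := by
  refine natDegree_alliancePoly_le.antisymm (le_natDegree_of_ne_zero ?_)
  have hcoeff := coeff_alliancePoly (G := G) (k := G.maxDegree) (by simp)
  rw [show ((Fintype.card V : ℤ) + G.maxDegree).toNat = Fintype.card V + G.maxDegree by omega]
    at hcoeff
  rw [hcoeff]
  exact_mod_cast h

theorem natTrailingDegree_alliancePoly [Nonempty V] :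
    G.alliancePoly.natTrailingDegree = Fintype.card V - G.maxDegree := by
  have hlt := G.maxDegree_lt_card_verts
  obtain ⟨v, hv⟩ := G.exists_maximal_degree_vertex
  have hcoeff := coeff_alliancePoly (G := G) (k := -G.maxDegree) (by simp)
  rw [show ((Fintype.card V : ℤ) + -G.maxDegree).toNat = Fintype.card V - G.maxDegree by omega]
    at hcoeff
  have hne : G.alliancePoly.coeff (Fintype.card V - G.maxDegree) ≠ 0 := by
    rw [hcoeff, Nat.cast_ne_zero, ← Nat.pos_iff_ne_zero, allianceCoeff,
      Set.ncard_pos (Set.toFinite _)]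
    exact ⟨{v}, hv ▸ isExactAlliance_singleton v⟩
  exact (natTrailingDegree_le_of_ne_zero hne).antisymm
    (le_natTrailingDegree (fun h0 ↦ hne (by rw [h0, coeff_zero]))
      fun i hi ↦ coeff_alliancePoly_eq_zero_of_lt hi)

end SimpleGraph

/-- For a Δ-regular graph of order `n ≥ 1` and size `m`, `Deg(A(G;x)) = n + Δ`,
`n = (Deg_min + Deg)/2`, `m = (Deg² - Deg_min²)/8` and `m = A_{-Δ}(G)·(Deg - Deg_min)/4`. -/
theorem alliancePoly_degree_order_size
    {V : Type*} [Fintype V] [DecidableEq V] [Nonempty V]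
    (G : SimpleGraph V) [DecidableRel G.Adj] (Δ : ℕ)
    (hreg : G.IsRegularOfDegree Δ) :
    G.alliancePoly.natDegree = Fintype.card V + Δ ∧
    (Fintype.card V : ℚ) =
      ((G.alliancePoly.natTrailingDegree : ℚ) + (G.alliancePoly.natDegree : ℚ)) / 2 ∧
    (G.edgeFinset.card : ℚ) =
      ((G.alliancePoly.natDegree : ℚ) ^ 2 - (G.alliancePoly.natTrailingDegree : ℚ) ^ 2) / 8 ∧
    (G.edgeFinset.card : ℚ) =
      (G.allianceCoeff (-(Δ : ℤ)) : ℚ) *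
        ((G.alliancePoly.natDegree : ℚ) - (G.alliancePoly.natTrailingDegree : ℚ)) / 4 := by
  have hmax : G.maxDegree = Δ := hreg.maxDegree_eq
  have hlt : Δ < Fintype.card V := hmax ▸ G.maxDegree_lt_card_verts
  have hdeg : G.alliancePoly.natDegree = Fintype.card V + Δ :=
    hmax ▸ SimpleGraph.natDegree_alliancePoly (hmax ▸ hreg.allianceCoeff_pos.ne')
  have htrail : G.alliancePoly.natTrailingDegree = Fintype.card V - Δ :=
    hmax ▸ SimpleGraph.natTrailingDegree_alliancePoly
  have hedges : (2 * G.edgeFinset.card : ℚ) = Fintype.card V * Δ := by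
    exact_mod_cast hreg.two_mul_card_edgeFinset
  rw [hdeg, htrail, hreg.allianceCoeff_neg, Nat.cast_sub hlt.le]
  push_cast
  refine ⟨rfl, by ring, by linear_combination hedges / 2, by linear_combination hedges / 2⟩
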